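/- Let 0 ≤ λ ≤ 1, 0 < w ≤ 1, and for t = r+1, …, T let q_t ∈ [0,1] satisfy q_t ≥ η/p·w where 0 < η ≤ p ≤ 1. If a sequence of events has P(failure at step t | history) ≤ λ(1 - q_t) + (1-λ)(1 - w) for t > r and ≤ 1 - w for t ≤ r, then the probability of failure at every step 1, …, T is at most exp(-((T-r)·(λη/p + (1-λ)) + r)·w). -/
import Mathlib


open MeasureTheory Finset

theorem sracos_failure_prob_bound
    {Ω : Type*} [MeasurableSpace Ω] (P : Measure Ω) [IsProbabilityMeasure P]
    (T r : ℕ) (hrT : r ≤ T)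
    (lam w η p : ℝ) (q : ℕ → ℝ)
    (hlam0 : 0 ≤ lam) (hlam1 : lam ≤ 1)
    (hw0 : 0 < w) (hw1 : w ≤ 1)
    (hη0 : 0 < η) (hηp : η ≤ p) (hp1 : p ≤ 1)
    (hq0 : ∀ t, 0 ≤ q t) (hq1 : ∀ t, q t ≤ 1)
    (hqlb : ∀ t, r < t → t ≤ T → q t ≥ η / p * w)
    (F : ℕ → Set Ω)
    (hcond : ∀ t ∈ Finset.Icc 1 T,
      (P (⋂ s ∈ Finset.Icc 1 t, F s)).toReal ≤
        (if t ≤ r then 1 - w else lam * (1 - q t) + (1 - lam) * (1 - w)) *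
          (P (⋂ s ∈ Finset.Icc 1 (t - 1), F s)).toReal) :
    (P (⋂ s ∈ Finset.Icc 1 T, F s)).toReal ≤
      Real.exp (-((((T : ℝ) - r) * (lam * η / p + (1 - lam)) + r) * w)) := by
  have hp0 : 0 < p := lt_of_lt_of_le hη0 hηp
  set c : ℕ → ℝ := fun t =>
    if t ≤ r then 1 - w else lam * (1 - q t) + (1 - lam) * (1 - w) with hc
  have hc0 : ∀ t, 0 ≤ c t := by
    intro t
    simp only [hc]
    split
    · linarith
    · have h1 : 0 ≤ lam * (1 - q t) := mul_nonneg hlam0 (by linarith [hq1 t])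
      have h2 : 0 ≤ (1 - lam) * (1 - w) := mul_nonneg (by linarith) (by linarith)
      linarith
  -- step 1: probability bounded by product of c
  have key : ∀ n, n ≤ T → (P (⋂ s ∈ Finset.Icc 1 n, F s)).toReal ≤
      ∏ t ∈ Finset.Icc 1 n, c t := by
    intro n
    induction n with
    | zero =>
      intro _
      simp [measure_univ]
    | succ m ih =>
      intro hm
      have hmem : m + 1 ∈ Finset.Icc 1 T := by
        simp [Nat.succ_le_iff]; omega
      have h1 := hcond (m + 1) hmem
      have h2 : (P (⋂ s ∈ Finset.Icc 1 m, F s)).toReal ≤ ∏ t ∈ Finset.Icc 1 m, c t :=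
        ih (by omega)
      have hprod : ∏ t ∈ Finset.Icc 1 (m + 1), c t =
          c (m + 1) * ∏ t ∈ Finset.Icc 1 m, c t := by
        rw [Finset.prod_Icc_succ_top (by omega), mul_comm]
      rw [hprod]
      simp only [Nat.add_sub_cancel] at h1
      calc (P (⋂ s ∈ Finset.Icc 1 (m + 1), F s)).toReal
          ≤ c (m + 1) * (P (⋂ s ∈ Finset.Icc 1 m, F s)).toReal := h1
        _ ≤ c (m + 1) * ∏ t ∈ Finset.Icc 1 m, c t :=
            mul_le_mul_of_nonneg_left h2 (hc0 (m + 1))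
  -- step 2: bound each c t by an exponential
  set b : ℕ → ℝ := fun t =>
    if t ≤ r then -w else -((lam * η / p + (1 - lam)) * w) with hb
  have hcb : ∀ t ∈ Finset.Icc 1 T, c t ≤ Real.exp (b t) := by
    intro t ht
    simp only [Finset.mem_Icc] at ht
    simp only [hc, hb]
    split
    · have := Real.add_one_le_exp (-w)
      linarith
    · rename_i hgt
      have hr : r < t := by omega
      have hq : q t ≥ η / p * w := hqlb t hr ht.2
      have hceq : lam * (1 - q t) + (1 - lam) * (1 - w)
          = 1 - (lam * q t + (1 - lam) * w) := by ring
      have hmono : lam * (η / p * w) + (1 - lam) * w ≤ lam * q t + (1 - lam) * w := by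
        have := mul_le_mul_of_nonneg_left hq hlam0
        linarith
      have hexp := Real.add_one_le_exp (-((lam * η / p + (1 - lam)) * w))
      have heq2 : lam * (η / p * w) + (1 - lam) * w = (lam * η / p + (1 - lam)) * w := by
        ring
      linarith
  have hprodle : ∏ t ∈ Finset.Icc 1 T, c t ≤ ∏ t ∈ Finset.Icc 1 T, Real.exp (b t) :=
    Finset.prod_le_prod (fun t _ => hc0 t) hcb
  rw [← Real.exp_sum] at hprodle
  -- step 3: compute the sum
  have hsum : ∑ t ∈ Finset.Icc 1 T, b t =
      -((((T : ℝ) - r) * (lam * η / p + (1 - lam)) + r) * w) := by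
    have hsplit : Finset.Icc 1 T = Finset.Icc 1 r ∪ Finset.Icc (r + 1) T := by
      ext x; simp only [Finset.mem_Icc, Finset.mem_union]; omega
    rw [hsplit, Finset.sum_union (by
      simp [Finset.disjoint_left, Finset.mem_Icc]; omega)]
    have h1 : ∑ t ∈ Finset.Icc 1 r, b t = r * (-w) := by
      have e : ∑ t ∈ Finset.Icc 1 r, b t = ∑ _t ∈ Finset.Icc 1 r, (-w) :=
        Finset.sum_congr rfl (fun t ht => by
          simp only [hb]; rw [if_pos (Finset.mem_Icc.mp ht).2])
      rw [e, Finset.sum_const, Nat.card_Icc]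
      simp [nsmul_eq_mul]
    have h2 : ∑ t ∈ Finset.Icc (r + 1) T, b t =
        ((T : ℝ) - r) * (-((lam * η / p + (1 - lam)) * w)) := by
      have e : ∑ t ∈ Finset.Icc (r + 1) T, b t =
          ∑ _t ∈ Finset.Icc (r + 1) T, (-((lam * η / p + (1 - lam)) * w)) :=
        Finset.sum_congr rfl (fun t ht => by
          have hnt : ¬ t ≤ r := by have := (Finset.mem_Icc.mp ht).1; omega
          simp only [hb]; rw [if_neg hnt])
      rw [e, Finset.sum_const, Nat.card_Icc]
      have h : T + 1 - (r + 1) = T - r := by omega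
      rw [h, nsmul_eq_mul, Nat.cast_sub hrT]
    rw [h1, h2]; ring
  rw [hsum] at hprodle
  exact le_trans (key T le_rfl) hprodle
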